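/- Let $(X, \mathcal{F}, \mu)$ be a complete measure space, $\mathcal{H}$ a Hilbert space, and let $\mathrm{id} \overline{\otimes} q : \mathbb{B}(\mathcal{H}) \overline{\otimes} M^\infty(\mathcal{F}) \to \mathbb{B}(\mathcal{H}) \overline{\otimes} L^\infty(X, \mu)$ be the unique unital completely positive map extending $\mathrm{id} \odot q$. If $\rho$ is a lifting for $(X, \mathcal{F}, \mu)$, then the unique unital completely positive map $\mathrm{id} \overline{\otimes} \rho : \mathbb{B}(\mathcal{H}) \overline{\otimes} L^\infty(X, \mu) \to \mathbb{B}(\mathcal{H}) \overline{\otimes} M^\infty(\mathcal{F})$ extending $\mathrm{id} \odot \rho$ is a unital complete order embedding and satisfies $(\mathrm{id} \overline{\otimes} q) \circ (\mathrm{id} \overline{\otimes} \rho) = \mathrm{id}$. -/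

import Mathlib

set_option linter.unusedVariables false

universe u

noncomputable section

open MeasureTheory Filter Topology Set

namespace Paper

/-- The bounded operators on a complex Hilbert space. -/
abbrev BH (H : Type*) [NormedAddCommGroup H] [InnerProductSpace ℂ H] [CompleteSpace H] :=
  H →L[ℂ] H

instance piLpCompleteSpace (H : Type*) [NormedAddCommGroup H] [InnerProductSpace ℂ H]
    [CompleteSpace H] (n : ℕ) : CompleteSpace (PiLp 2 fun _ : Fin n => H) :=
  inferInstance

section Basic

variable {H K L : Type*}
  [NormedAddCommGroup H] [InnerProductSpace ℂ H] [CompleteSpace H]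
  [NormedAddCommGroup K] [InnerProductSpace ℂ K] [CompleteSpace K]
  [NormedAddCommGroup L] [InnerProductSpace ℂ L] [CompleteSpace L]

/-- An `n × n` matrix of bounded operators on `H`, viewed as a bounded operator on the
Hilbert space direct sum of `n` copies of `H`. -/
def matOp {n : ℕ} (M : Matrix (Fin n) (Fin n) (BH H)) : BH (PiLp 2 fun _ : Fin n => H) :=
  (((PiLp.continuousLinearEquiv 2 ℂ (fun _ : Fin n => H)).symm :
      ((i : Fin n) → H) →L[ℂ] PiLp 2 fun _ : Fin n => H)).comp <|
    (ContinuousLinearMap.pi fun i => ∑ j, (M i j).comp (ContinuousLinearMap.proj j)).comp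
      (((PiLp.continuousLinearEquiv 2 ℂ (fun _ : Fin n => H)) :
        (PiLp 2 fun _ : Fin n => H) →L[ℂ] ((i : Fin n) → H)))

/-- All entries of a matrix of operators belong to the set `A`. -/
def entriesIn {n : ℕ} (M : Matrix (Fin n) (Fin n) (BH H)) (A : Set (BH H)) : Prop :=
  ∀ i j, M i j ∈ A

/-- `φ` is linear on the subset `A`. -/
def IsLinearOn (φ : BH H → BH K) (A : Set (BH H)) : Prop :=
  (∀ x ∈ A, ∀ y ∈ A, φ (x + y) = φ x + φ y) ∧ (∀ (c : ℂ), ∀ x ∈ A, φ (c • x) = c • φ x)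

/-- `φ` is an algebra homomorphism on the subset `A`. -/
def IsHomOn (φ : BH H → BH K) (A : Set (BH H)) : Prop :=
  IsLinearOn φ A ∧ ∀ x ∈ A, ∀ y ∈ A, φ (x * y) = φ x * φ y

/-- `φ` is a ∗-homomorphism on the subset `A`. -/
def IsStarHomOn (φ : BH H → BH K) (A : Set (BH H)) : Prop :=
  IsHomOn φ A ∧ ∀ x ∈ A, φ (star x) = star (φ x)

/-- `φ` is completely positive on the subset `A`. -/
def IsCompletelyPositiveOn (φ : BH H → BH K) (A : Set (BH H)) : Prop :=
  ∀ (n : ℕ) (M : Matrix (Fin n) (Fin n) (BH H)), entriesIn M A →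
    (matOp M).IsPositive → (matOp (M.map φ)).IsPositive

/-- `φ` is completely contractive on the subset `A`. -/
def IsCompletelyContractiveOn (φ : BH H → BH K) (A : Set (BH H)) : Prop :=
  ∀ (n : ℕ) (M : Matrix (Fin n) (Fin n) (BH H)), entriesIn M A →
    ‖matOp (M.map φ)‖ ≤ ‖matOp M‖

/-- `φ` is completely isometric on the subset `A`. -/
def IsCompletelyIsometricOn (φ : BH H → BH K) (A : Set (BH H)) : Prop :=
  ∀ (n : ℕ) (M : Matrix (Fin n) (Fin n) (BH H)), entriesIn M A →
    ‖matOp (M.map φ)‖ = ‖matOp M‖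

/-- `φ` is a complete order embedding on the subset `A`: all matrix amplifications of `φ`
reflect and preserve positivity. -/
def IsCompleteOrderEmbeddingOn (φ : BH H → BH K) (A : Set (BH H)) : Prop :=
  ∀ (n : ℕ) (M : Matrix (Fin n) (Fin n) (BH H)), entriesIn M A →
    ((matOp (M.map φ)).IsPositive ↔ (matOp M).IsPositive)

/-- A unital completely positive map on the subset `A` (operator system). -/
def IsUCPOn (φ : BH H → BH K) (A : Set (BH H)) : Prop :=
  IsLinearOn φ A ∧ IsCompletelyPositiveOn φ A ∧ φ 1 = 1

/-- `A` is a (not necessarily unital, not necessarily closed) subalgebra of `B(H)`. -/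
def IsSubalgebra (A : Set (BH H)) : Prop :=
  (∀ x ∈ A, ∀ y ∈ A, x + y ∈ A) ∧ (∀ (c : ℂ), ∀ x ∈ A, c • x ∈ A) ∧
    (∀ x ∈ A, ∀ y ∈ A, x * y ∈ A)

/-- An operator algebra: a norm-closed subalgebra of the bounded operators. -/
def IsOperatorAlgebra (A : Set (BH H)) : Prop :=
  IsSubalgebra A ∧ IsClosed A

/-- A concrete C*-algebra: a norm-closed self-adjoint subalgebra of the bounded operators. -/
def IsCStarSubalgebra (B : Set (BH H)) : Prop :=
  IsOperatorAlgebra B ∧ ∀ x ∈ B, star x ∈ B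

/-- The C*-subalgebra of `B(K)` generated by a subset `S`. -/
def genCStar (S : Set (BH K)) : Set (BH K) :=
  ⋂₀ {B : Set (BH K) | IsCStarSubalgebra B ∧ S ⊆ B}

/-- The norm-closed (non-selfadjoint) operator algebra generated by a subset `S`. -/
def genOpAlg (S : Set (BH K)) : Set (BH K) :=
  ⋂₀ {B : Set (BH K) | IsOperatorAlgebra B ∧ S ⊆ B}

/-- `π` is nondegenerate on `A`: the images `π(a)ξ` have dense linear span. -/
def IsNondegenerateOn (π : BH H → BH K) (A : Set (BH H)) : Prop :=
  (Submodule.span ℂ {ξ : K | ∃ a ∈ A, ∃ η : K, π a η = ξ}).topologicalClosure = ⊤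

/-- `A` admits a contractive approximate identity (formulated via a filter/net). -/
def HasContractiveAI (A : Set (BH H)) : Prop :=
  ∃ l : Filter (BH H), l.NeBot ∧ (∀ᶠ x in l, x ∈ A ∧ ‖x‖ ≤ 1) ∧
    ∀ a ∈ A, Tendsto (fun x => x * a) l (nhds a) ∧ Tendsto (fun x => a * x) l (nhds a)

/-- `A` admits a self-adjoint contractive approximate identity. -/
def HasSAContractiveAI (A : Set (BH H)) : Prop :=
  ∃ l : Filter (BH H), l.NeBot ∧ (∀ᶠ x in l, x ∈ A ∧ IsSelfAdjoint x ∧ ‖x‖ ≤ 1) ∧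
    ∀ a ∈ A, Tendsto (fun x => x * a) l (nhds a) ∧ Tendsto (fun x => a * x) l (nhds a)

/-- `π` has the unique extension property with respect to the generating subalgebra `A` of
the C*-algebra `B`:  `π` is the unique completely contractive completely positive map on `B`
agreeing with `π` on `A`. -/
def HasUEP (π : BH H → BH K) (B A : Set (BH H)) : Prop :=
  ∀ ψ : BH H → BH K, IsLinearOn ψ B → IsCompletelyPositiveOn ψ B →
    IsCompletelyContractiveOn ψ B → (∀ a ∈ A, ψ a = π a) → ∀ b ∈ B, ψ b = π b

/-- `(genCStar (ε '' A), ε)` is a C*-envelope of the operator algebra `A`:  `ε` is a completely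
isometric representation and the generated C*-algebra has the co-universal property. -/
def IsCStarEnvelope.{v} (A : Set (BH H)) (ε : BH H → BH K) : Prop :=
  IsHomOn ε A ∧ IsCompletelyIsometricOn ε A ∧
  ∀ (K' : Type v) [instK'1 : NormedAddCommGroup K'] [instK'2 : InnerProductSpace ℂ K']
      [instK'3 : CompleteSpace K'] (ι : BH H → BH K'),
    IsHomOn ι A → IsCompletelyIsometricOn ι A →
    ∃ Φ : BH K' → BH K,
      IsStarHomOn Φ (genCStar (ι '' A)) ∧
      Φ '' (genCStar (ι '' A)) = genCStar (ε '' A) ∧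
      ∀ a ∈ A, Φ (ι a) = ε a

/-- The Loewner order: `T ≼ S`. -/
def opLE (T S : BH K) : Prop := (S - T).IsPositive

/-- `T` is the least upper bound in `B` of the subset `s`. -/
def IsLUBIn (B s : Set (BH K)) (T : BH K) : Prop :=
  T ∈ B ∧ (∀ x ∈ s, opLE x T) ∧ ∀ y ∈ B, (∀ x ∈ s, opLE x y) → opLE T y

/-- A subset of `B(K)` is monotone complete: every nonempty upward directed bounded family of
self-adjoint elements of `B` admits a least upper bound in `B`. -/
def IsMonotoneComplete (B : Set (BH K)) : Prop :=
  ∀ s ⊆ B, s.Nonempty → (∀ x ∈ s, IsSelfAdjoint x) → DirectedOn opLE s →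
    (∃ b : BH K, ∀ x ∈ s, opLE x b) → ∃ T, IsLUBIn B s T

end Basic

section Dynamics

variable (G : Type*) [Group G] [TopologicalSpace G]
variable {H K : Type*}
  [NormedAddCommGroup H] [InnerProductSpace ℂ H] [CompleteSpace H]
  [NormedAddCommGroup K] [InnerProductSpace ℂ K] [CompleteSpace K]

/-- A dynamical system: a point-norm continuous action of `G` on the operator algebra `A`
by completely isometric automorphisms. -/
def IsDynamicalSystem (A : Set (BH H)) (act : G → BH H → BH H) : Prop :=
  IsOperatorAlgebra A ∧
  (∀ g, Set.MapsTo (act g) A A) ∧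
  (∀ g, IsHomOn (act g) A) ∧
  (∀ a ∈ A, act 1 a = a) ∧
  (∀ g h, ∀ a ∈ A, act (g * h) a = act g (act h a)) ∧
  (∀ g, IsCompletelyIsometricOn (act g) A) ∧
  (∀ a ∈ A, Continuous fun g => act g a)

/-- A C*-dynamical system: a point-norm continuous action of `G` on the concrete
C*-algebra `B` by ∗-automorphisms. -/
def IsCStarDynamicalSystem (B : Set (BH H)) (act : G → BH H → BH H) : Prop :=
  IsCStarSubalgebra B ∧
  (∀ g, Set.MapsTo (act g) B B) ∧
  (∀ g, IsStarHomOn (act g) B) ∧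
  (∀ b ∈ B, act 1 b = b) ∧
  (∀ g h, ∀ b ∈ B, act (g * h) b = act g (act h b)) ∧
  (∀ b ∈ B, Continuous fun g => act g b)

end Dynamics

section Haar

variable (G : Type*) [Group G] [TopologicalSpace G] [IsTopologicalGroup G]
  [LocallyCompactSpace G] [T2Space G] [MeasurableSpace G] [BorelSpace G]

/-- Left Haar measure on `G`. -/
abbrev haarG : Measure G := Measure.haar

variable (K : Type*) [NormedAddCommGroup K] [InnerProductSpace ℂ K] [CompleteSpace K]

/-- The Hilbert space `L²(G, K) ≅ K ⊗ L²(G)` with respect to left Haar measure. -/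
abbrev L2 := Lp K 2 (haarG G)

variable {G K}

/-- `U` is (the ampliation of) the left regular representation `1 ⊗ λ` on `L²(G, K)`. -/
def IsTranslationRep (U : G → BH (L2 G K)) : Prop :=
  ∀ (g : G) (ξ : L2 G K), ⇑(U g ξ) =ᵐ[haarG G] fun h => ξ (g⁻¹ * h)

variable {H : Type*} [NormedAddCommGroup H] [InnerProductSpace ℂ H] [CompleteSpace H]

/-- `PA` is the multiplication representation `π_α` on `L²(G, K)` associated to a
representation `π` and an action `act`: `(π_α(a) ξ)(g) = π (α_g⁻¹ a) (ξ g)` for `a ∈ B`. -/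
def IsPiAlpha (act : G → BH H → BH H) (π : BH H → BH K) (B : Set (BH H))
    (PA : BH H → BH (L2 G K)) : Prop :=
  ∀ a ∈ B, ∀ ξ : L2 G K, ⇑(PA a ξ) =ᵐ[haarG G] fun g => π (act g⁻¹ a) (ξ g)

/-- The integrated form `σ(f) = ∫ π_α(f(g)) U(g) dg` of a covariant pair. -/
def integratedForm (PA : BH H → BH (L2 G K)) (U : G → BH (L2 G K)) (f : G → BH H) :
    BH (L2 G K) :=
  ∫ g, (PA (f g)) * (U g) ∂(haarG G)

/-- The reduced crossed product of (the closed subspace, subalgebra, …) `S` by `G`: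
the norm closure of the integrated forms of compactly supported continuous `S`-valued
functions. -/
def reducedCrossedProduct (S : Set (BH H)) (PA : BH H → BH (L2 G K))
    (U : G → BH (L2 G K)) : Set (BH (L2 G K)) :=
  closure {T | ∃ f : G → BH H, Continuous f ∧ HasCompactSupport f ∧ (∀ g, f g ∈ S) ∧
    T = integratedForm PA U f}

end Haar

section Fubini

variable {X : Type*} [MeasurableSpace X]
variable {H E : Type*} [NormedAddCommGroup H] [InnerProductSpace ℂ H] [CompleteSpace H]
  [NormedAddCommGroup E] [InnerProductSpace ℂ E] [CompleteSpace E]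

/-- The bounded measurable complex functions on `X` (the C*-algebra `M^∞(F)`). -/
def MInfty (X : Type*) [MeasurableSpace X] : Set (X → ℂ) :=
  {f | Measurable f ∧ ∃ C : ℝ, ∀ x, ‖f x‖ ≤ C}

/-- The ℓ²-direct sum of copies of `E` over `X`, i.e. `E ⊗ ℓ²(X)`. -/
abbrev ld2 (X : Type*) (E : Type*) [NormedAddCommGroup E] [InnerProductSpace ℂ E] :
    Type _ := lp (fun _ : X => E) 2

/-- `m` implements multiplication by bounded measurable functions on `L²(X, μ; E)`. -/
def IsMulRepL (μ : Measure X) (m : (X → ℂ) → BH (Lp E 2 μ)) : Prop :=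
  ∀ f ∈ MInfty X, ∀ ξ : Lp E 2 μ, ⇑(m f ξ) =ᵐ[μ] fun x => f x • ξ x

/-- `m` implements multiplication by bounded functions on `ℓ²(X; E)`. -/
def IsMulRepD (m : (X → ℂ) → BH (ld2 X E)) : Prop :=
  ∀ f ∈ MInfty X, ∀ (ξ : ld2 X E) (x : X), (m f ξ) x = f x • ξ x

/-- `oT` implements the elementary tensors `T ⊗ f` on `L²(X, μ; H) ≅ H ⊗ L²(X, μ)`. -/
def IsElemTensorRepL (μ : Measure X) (oT : BH H → (X → ℂ) → BH (Lp H 2 μ)) : Prop :=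
  ∀ (T : BH H), ∀ f ∈ MInfty X, ∀ ξ : Lp H 2 μ, ⇑(oT T f ξ) =ᵐ[μ] fun x => f x • T (ξ x)

/-- `oT` implements the elementary tensors `T ⊗ f` on `ℓ²(X; H) ≅ H ⊗ ℓ²(X)`. -/
def IsElemTensorRepD (oT : BH H → (X → ℂ) → BH (ld2 X H)) : Prop :=
  ∀ (T : BH H), ∀ f ∈ MInfty X, ∀ (ξ : ld2 X H) (x : X), (oT T f ξ) x = f x • T (ξ x)

/-- `J` is the family of isometries `J_i k = e_i ⊗ k`, i.e. `(J_i k)(x) = k(x) • e_i`, from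
`L²(X, μ)` into `L²(X, μ; H)`, associated with an orthonormal basis `e` of `H`. -/
def IsTensorIsometriesL (μ : Measure X) {ι : Type*} (e : ι → H)
    (J : ι → (Lp ℂ 2 μ →L[ℂ] Lp H 2 μ)) : Prop :=
  Orthonormal ℂ e ∧ (Submodule.span ℂ (Set.range e)).topologicalClosure = ⊤ ∧
    ∀ (i : ι) (k : Lp ℂ 2 μ), ⇑(J i k) =ᵐ[μ] fun x => k x • e i

/-- `J` is the family of isometries `J_i k = e_i ⊗ k` from `ℓ²(X)` into `ℓ²(X; H)`,
associated with an orthonormal basis `e` of `H`. -/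
def IsTensorIsometriesD {ι : Type*} (e : ι → H)
    (J : ι → (ld2 X ℂ →L[ℂ] ld2 X H)) : Prop :=
  Orthonormal ℂ e ∧ (Submodule.span ℂ (Set.range e)).topologicalClosure = ⊤ ∧
    ∀ (i : ι) (k : ld2 X ℂ) (x : X), (J i k) x = k x • e i

/-- Hamana's Fubini tensor product `B(H) ⊗̄ S`, relative to the family of isometries
`J_i = 1 ⊗ e_i`: the set of operators all of whose slices `J_i* x J_j` lie in `S`. -/
def fubini {KK HK : Type*} [NormedAddCommGroup KK] [InnerProductSpace ℂ KK] [CompleteSpace KK]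
    [NormedAddCommGroup HK] [InnerProductSpace ℂ HK] [CompleteSpace HK]
    {ι : Type*} (J : ι → (KK →L[ℂ] HK)) (S : Set (BH KK)) : Set (BH HK) :=
  {T | ∀ i j, (ContinuousLinearMap.adjoint (J i)).comp (T.comp (J j)) ∈ S}

/-- A lifting for the (complete) measure `μ`: a ∗-homomorphic selection
`L^∞(X, μ) → M^∞(F)`, described at the level of bounded measurable functions: it is
well defined on a.e.-classes and picks a genuine bounded measurable representative. -/
def IsLifting (μ : Measure X) (ρ : (X → ℂ) → (X → ℂ)) : Prop :=
  (∀ f ∈ MInfty X, ρ f ∈ MInfty X ∧ ρ f =ᵐ[μ] f) ∧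
  (∀ f ∈ MInfty X, ∀ g ∈ MInfty X, f =ᵐ[μ] g → ρ f = ρ g) ∧
  (ρ (fun _ => (1 : ℂ)) = fun _ => 1) ∧
  (∀ f ∈ MInfty X, ∀ g ∈ MInfty X, ρ (f + g) = ρ f + ρ g) ∧
  (∀ f ∈ MInfty X, ∀ g ∈ MInfty X, ρ (f * g) = ρ f * ρ g) ∧
  (∀ (c : ℂ), ∀ f ∈ MInfty X, ρ (c • f) = c • ρ f) ∧
  (∀ f ∈ MInfty X, ρ (star f) = star (ρ f))

end Fubini

section Correspondence

variable {H₀ KK : Type*}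
  [NormedAddCommGroup H₀] [InnerProductSpace ℂ H₀] [CompleteSpace H₀]
  [NormedAddCommGroup KK] [InnerProductSpace ℂ KK] [CompleteSpace KK]

/-- A (nondegenerate) C*-correspondence over `B`, concretely and riggedly represented:
`X` is a norm-closed subspace with `B·X ⊆ X`, `X·B ⊆ X`, `X*·X ⊆ B`, and the left action
of `B` on `X` is nondegenerate. The `B`-valued inner product is `⟨x, y⟩ = x* y`. -/
def IsConcreteCorrespondence (B X : Set (BH H₀)) : Prop :=
  IsCStarSubalgebra B ∧
  (IsClosed X ∧ (∀ x ∈ X, ∀ y ∈ X, x + y ∈ X) ∧ (∀ (c : ℂ), ∀ x ∈ X, c • x ∈ X)) ∧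
  (∀ b ∈ B, ∀ x ∈ X, b * x ∈ X) ∧
  (∀ x ∈ X, ∀ b ∈ B, x * b ∈ X) ∧
  (∀ x ∈ X, ∀ y ∈ X, star x * y ∈ B) ∧
  closure ((Submodule.span ℂ {z : BH H₀ | ∃ b ∈ B, ∃ x ∈ X, z = b * x} : Submodule ℂ (BH H₀)) :
    Set (BH H₀)) = X

/-- Katsura's ideal `J_X ⊆ B`: the elements acting as compact (i.e. norm limits of finite
sums of "rank one" operators `θ_{x,y} = x y*`) operators on `X` and orthogonal to the
kernel of the left action. -/
def KatsuraIdeal (B X : Set (BH H₀)) : Set (BH H₀) :=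
  {b | b ∈ B ∧ (∀ c ∈ B, (∀ x ∈ X, c * x = 0) → b * c = 0) ∧
    ∀ ε > (0:ℝ), ∃ (n : ℕ) (xs ys : Fin n → BH H₀), (∀ i, xs i ∈ X ∧ ys i ∈ X) ∧
      ∀ z ∈ X, ‖z‖ ≤ 1 → ‖b * z - ∑ i, xs i * star (ys i) * z‖ ≤ ε}

/-- A rigged (isometric) representation `(ρ, t)` of the C*-correspondence `(B, X)`. -/
def IsRiggedRep (B X : Set (BH H₀)) (ρ t : BH H₀ → BH KK) : Prop :=
  IsStarHomOn ρ B ∧ IsNondegenerateOn ρ B ∧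
  (∀ x ∈ X, ∀ y ∈ X, t (x + y) = t x + t y) ∧
  (∀ (c : ℂ), ∀ x ∈ X, t (c • x) = c • t x) ∧
  (∀ b ∈ B, ∀ x ∈ X, t (b * x) = ρ b * t x) ∧
  (∀ x ∈ X, ∀ b ∈ B, t (x * b) = t x * ρ b) ∧
  (∀ x ∈ X, ∀ y ∈ X, star (t x) * t y = ρ (star x * y))

/-- A covariant rigged representation: on Katsura's ideal, `ψ_t ∘ φ_X = ρ`. -/
def IsCovariantRep (B X : Set (BH H₀)) (ρ t : BH H₀ → BH KK) : Prop :=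
  IsRiggedRep B X ρ t ∧
  ∀ b ∈ KatsuraIdeal B X, ∀ ε > (0:ℝ), ∀ (n : ℕ) (xs ys : Fin n → BH H₀),
    (∀ i, xs i ∈ X ∧ ys i ∈ X) →
    (∀ z ∈ X, ‖z‖ ≤ 1 → ‖b * z - ∑ i, xs i * star (ys i) * z‖ ≤ ε) →
    ‖ρ b - ∑ i, t (xs i) * star (t (ys i))‖ ≤ ε

/-- `(ρ0, t0)` realizes the Toeplitz algebra `T_X`: a rigged representation which is
universal among all rigged representations of `(B, X)`. -/
def IsToeplitzAlgebra.{v} (B X : Set (BH H₀)) (ρ0 t0 : BH H₀ → BH KK) : Prop :=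
  IsRiggedRep B X ρ0 t0 ∧
  ∀ (K' : Type v) [instK'1 : NormedAddCommGroup K'] [instK'2 : InnerProductSpace ℂ K']
      [instK'3 : CompleteSpace K'] (ρ t : BH H₀ → BH K'),
    IsRiggedRep B X ρ t →
    ∃ Φ : BH KK → BH K',
      IsStarHomOn Φ (genCStar (ρ0 '' B ∪ t0 '' X)) ∧
      (∀ b ∈ B, Φ (ρ0 b) = ρ b) ∧ (∀ x ∈ X, Φ (t0 x) = t x)

/-- `(ρ0, t0)` realizes the Cuntz–Pimsner algebra `O_X`: a covariant rigged representation
which is universal among all covariant rigged representations of `(B, X)`. -/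
def IsCuntzPimsner.{v} (B X : Set (BH H₀)) (ρ0 t0 : BH H₀ → BH KK) : Prop :=
  IsCovariantRep B X ρ0 t0 ∧
  ∀ (K' : Type v) [instK'1 : NormedAddCommGroup K'] [instK'2 : InnerProductSpace ℂ K']
      [instK'3 : CompleteSpace K'] (ρ t : BH H₀ → BH K'),
    IsCovariantRep B X ρ t →
    ∃ Φ : BH KK → BH K',
      IsStarHomOn Φ (genCStar (ρ0 '' B ∪ t0 '' X)) ∧
      (∀ b ∈ B, Φ (ρ0 b) = ρ b) ∧ (∀ x ∈ X, Φ (t0 x) = t x)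

end Correspondence

open ContinuousLinearMap
open scoped InnerProduct InnerProductSpace ComplexConjugate

/-!
Write `Ψ = Φq ∘ Φρ`, a unital completely positive map on `B(H) ⊗̄ L^∞(X, μ)`. Since `ρ f = f`
almost everywhere, `Ψ` fixes every elementary tensor `T ⊗ f`, in particular the projections
`P k = J k J k*`. A completely positive map fixing two projections `P`, `Q` maps the corner
`P y Q` of its domain into the same corner: this is read off from the positive `2 × 2` matrix
`[‖y‖ P, y; y*, ‖y‖ Q]`. Splitting `x = P i x P j + (1 - P i) x P j + x (1 - P j)`, only the
first piece, which is the elementary tensor `e_i e_j* ⊗ (J i* x J j)`, survives in the `(i, j)`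
slice. Hence `Ψ x` and `x` have the same slices, so they are equal; and `Φρ` is a complete order
embedding because it is completely positive with a completely positive left inverse.
-/

section MapsOn

variable {H K L : Type*}
  [NormedAddCommGroup H] [InnerProductSpace ℂ H] [CompleteSpace H]
  [NormedAddCommGroup K] [InnerProductSpace ℂ K] [CompleteSpace K]
  [NormedAddCommGroup L] [InnerProductSpace ℂ L] [CompleteSpace L]
  {f : BH H → BH K} {g : BH K → BH L} {A : Set (BH H)} {B : Set (BH K)}

lemma IsLinearOn.map_sub {A : Submodule ℂ (BH H)} (hf : IsLinearOn f A) {x y : BH H} (hx : x ∈ A)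
    (hy : y ∈ A) : f (x - y) = f x - f y := by
  rw [sub_eq_add_neg, ← neg_one_smul ℂ y, hf.1 _ hx _ (A.smul_mem _ hy), hf.2 _ _ hy, neg_one_smul,
    ← sub_eq_add_neg]

lemma IsLinearOn.comp (hg : IsLinearOn g B) (hf : IsLinearOn f A) (hfAB : Set.MapsTo f A B) :
    IsLinearOn (g ∘ f) A :=
  ⟨fun x hx y hy => by
    simp only [Function.comp_apply, hf.1 x hx y hy, hg.1 _ (hfAB hx) _ (hfAB hy)],
    fun c x hx => by simp only [Function.comp_apply, hf.2 c x hx, hg.2 c _ (hfAB hx)]⟩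

lemma IsCompletelyPositiveOn.comp (hg : IsCompletelyPositiveOn g B)
    (hf : IsCompletelyPositiveOn f A) (hfAB : Set.MapsTo f A B) :
    IsCompletelyPositiveOn (g ∘ f) A := fun n M hM hpos => by
  simpa [Matrix.map_map] using hg n (M.map f) (fun i j => hfAB (hM i j)) (hf n M hM hpos)

lemma IsCompletelyPositiveOn.isCompleteOrderEmbeddingOn_of_leftInvOn {g : BH K → BH H}
    (hf : IsCompletelyPositiveOn f A) (hg : IsCompletelyPositiveOn g B) (hfAB : Set.MapsTo f A B)
    (hgf : Set.LeftInvOn g f A) : IsCompleteOrderEmbeddingOn f A := fun n M hM => by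
  refine ⟨fun hpos => ?_, hf n M hM⟩
  have hMM : (M.map f).map g = M := Matrix.ext fun i j => hgf (hM i j)
  simpa [hMM] using hg n (M.map f) (fun i j => hfAB (hM i j)) hpos

end MapsOn

section OperatorMatrices

variable {E : Type*} [NormedAddCommGroup E] [InnerProductSpace ℂ E] [CompleteSpace E]

lemma matOp_apply {n : ℕ} (M : Matrix (Fin n) (Fin n) (BH E)) (v : PiLp 2 fun _ : Fin n => E)
    (i : Fin n) : matOp M v i = ∑ j, M i j (v j) := by
  simp [matOp, sum_apply]

lemma inner_matOp_two (M : Matrix (Fin 2) (Fin 2) (BH E)) (v w : PiLp 2 fun _ : Fin 2 => E) :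
    ⟪matOp M v, w⟫_ℂ =
      ⟪M 0 0 (v 0), w 0⟫_ℂ + ⟪M 0 1 (v 1), w 0⟫_ℂ + ⟪M 1 0 (v 0), w 1⟫_ℂ +
        ⟪M 1 1 (v 1), w 1⟫_ℂ := by
  simp only [PiLp.inner_apply, matOp_apply, Fin.sum_univ_two, inner_add_left]
  ring

lemma eq_zero_of_forall_nonneg_add_two_mul_re {r : ℝ} {α : ℂ}
    (h : ∀ s : ℂ, 0 ≤ r + 2 * (s * α).re) : α = 0 := by
  by_contra hα
  have hn : (Complex.normSq α : ℂ) ≠ 0 := by exact_mod_cast (Complex.normSq_pos.mpr hα).ne'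
  have hs : -(((r + 1) / (2 * Complex.normSq α) : ℝ) : ℂ) * conj α * α =
      ((-(r + 1) / 2 : ℝ) : ℂ) := by
    rw [mul_assoc, ← Complex.normSq_eq_conj_mul_self]
    push_cast
    field_simp
  have := h (-(((r + 1) / (2 * Complex.normSq α) : ℝ) : ℂ) * conj α)
  rw [hs, Complex.ofReal_re] at this
  linarith

lemma inner_matOp_two_apply_eq_zero_of_isPositive {M : Matrix (Fin 2) (Fin 2) (BH E)}
    (hM : (matOp M).IsPositive) {u w : E} (h : ⟪M 1 1 w, w⟫_ℂ = 0 ∨ ⟪M 0 0 u, u⟫_ℂ = 0) :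
    ⟪M 0 1 w, u⟫_ℂ = 0 := by
  have hsymm : ⟪M 1 0 u, w⟫_ℂ = conj ⟪M 0 1 w, u⟫_ℂ := by
    have := hM.inner_left_eq_inner_right (WithLp.toLp 2 ![0, w]) (WithLp.toLp 2 ![u, 0])
    rw [← inner_conj_symm (WithLp.toLp 2 ![(0 : E), w]), inner_matOp_two, inner_matOp_two] at this
    simp only [Matrix.cons_val_zero, Matrix.cons_val_one, Matrix.cons_val_fin_one, map_zero,
      inner_zero_left, inner_zero_right, zero_add, add_zero, inner_conj_symm] at this
    rw [this, inner_conj_symm]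
  have hform : ∀ a b : E, 0 ≤ (⟪M 0 0 a, a⟫_ℂ + ⟪M 0 1 b, a⟫_ℂ + ⟪M 1 0 a, b⟫_ℂ +
      ⟪M 1 1 b, b⟫_ℂ).re := fun a b => by
    simpa [inner_matOp_two] using hM.re_inner_nonneg_left (WithLp.toLp 2 ![a, b])
  rcases h with h | h
  · refine eq_zero_of_forall_nonneg_add_two_mul_re (r := (⟪M 0 0 u, u⟫_ℂ).re) fun s => ?_
    convert hform u (conj s • w) using 1
    simp only [map_smul, inner_smul_left, inner_smul_right, hsymm, h]
    generalize ⟪M 0 1 w, u⟫_ℂ = α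
    simp only [Complex.mul_re, RingHomCompTriple.comp_apply, RingHom.id_apply, mul_zero, add_zero,
      Complex.add_re, Complex.conj_re, Complex.conj_im, mul_neg, neg_mul, neg_neg]
    ring
  · refine eq_zero_of_forall_nonneg_add_two_mul_re (r := (⟪M 1 1 w, w⟫_ℂ).re) fun s => ?_
    convert hform (s • u) w using 1
    simp only [map_smul, inner_smul_left, inner_smul_right, hsymm, h]
    generalize ⟪M 0 1 w, u⟫_ℂ = α
    simp only [Complex.mul_re, mul_zero, zero_add, Complex.add_re, Complex.conj_re,
      Complex.conj_im, mul_neg, neg_mul, neg_neg]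
    ring

lemma _root_.IsStarProjection.inner_apply_self {P : BH E} (hP : IsStarProjection P) (a : E) :
    ⟪P a, a⟫_ℂ = (‖P a‖ ^ 2 : ℝ) := by
  calc ⟪P a, a⟫_ℂ = ⟪P (P a), a⟫_ℂ := by rw [← mul_apply_eq_comp, hP.isIdempotentElem.eq]
    _ = ⟪P a, P a⟫_ℂ := hP.isSelfAdjoint.isSymmetric _ _
    _ = (‖P a‖ ^ 2 : ℝ) := by rw [inner_self_eq_norm_sq_to_K]; push_cast; rfl

lemma isPositive_matOp_corner {P Q y : BH E} (hP : IsStarProjection P) (hQ : IsStarProjection Q)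
    (hy : P * y * Q = y) :
    (matOp !![(‖y‖ : ℂ) • P, y; star y, (‖y‖ : ℂ) • Q]).IsPositive := by
  rw [isPositive_iff_complex]
  intro v
  set a := v 0
  set b := v 1
  have hz : ⟪y b, a⟫_ℂ = ⟪y (Q b), P a⟫_ℂ := by
    conv_lhs => rw [← hy, mul_apply_eq_comp, mul_apply_eq_comp]
    exact hP.isSelfAdjoint.isSymmetric _ _
  have hform : ⟪matOp !![(‖y‖ : ℂ) • P, y; star y, (‖y‖ : ℂ) • Q] v, v⟫_ℂ =
      (‖y‖ * (‖P a‖ ^ 2 + ‖Q b‖ ^ 2) + 2 * (⟪y b, a⟫_ℂ).re : ℝ) := by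
    rw [inner_matOp_two]
    simp only [Complex.coe_smul, star_eq_adjoint, Matrix.of_apply, Matrix.cons_val',
      Matrix.cons_val_zero, Matrix.cons_val_fin_one, Matrix.cons_val_one, smul_apply,
      CStarModule.inner_smul_left_real, hP.inner_apply_self, hQ.inner_apply_self,
      Complex.real_smul, adjoint_inner_left]
    have hre : ⟪y b, a⟫_ℂ + conj ⟪y b, a⟫_ℂ = 2 * ((⟪y b, a⟫_ℂ).re : ℂ) := by
      rw [Complex.add_conj]; push_cast; ring
    push_cast
    linear_combination hre - inner_conj_symm (𝕜 := ℂ) a (y b)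
  have hbound : |(⟪y b, a⟫_ℂ).re| ≤ ‖y‖ * ‖Q b‖ * ‖P a‖ := by
    rw [hz]
    calc |(⟪y (Q b), P a⟫_ℂ).re| ≤ ‖⟪y (Q b), P a⟫_ℂ‖ := Complex.abs_re_le_norm _
      _ ≤ ‖y (Q b)‖ * ‖P a‖ := norm_inner_le_norm _ _
      _ ≤ ‖y‖ * ‖Q b‖ * ‖P a‖ := by gcongr; exact y.le_opNorm _
  rw [hform, RCLike.re_to_complex, Complex.ofReal_re]
  refine ⟨rfl, ?_⟩
  nlinarith [sq_nonneg (‖P a‖ - ‖Q b‖), abs_le.mp hbound, norm_nonneg y]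

/-- The dual form of `Ψ y = P * Ψ y * Q`: `Ψ` maps the corner `P A Q` into `P B(E) Q`. -/
lemma IsCompletelyPositiveOn.inner_apply_eq_zero_of_corner {Ψ : BH E → BH E}
    {A : Submodule ℂ (BH E)} (hΨlin : IsLinearOn Ψ A) (hΨcp : IsCompletelyPositiveOn Ψ A)
    {P Q : BH E} (hP : IsStarProjection P) (hQ : IsStarProjection Q) (hPA : P ∈ A) (hQA : Q ∈ A)
    (hΨP : Ψ P = P) (hΨQ : Ψ Q = Q) {y : BH E} (hy : P * y * Q = y) (hyA : y ∈ A)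
    (hyA' : star y ∈ A) {u w : E} (h : Q w = 0 ∨ P u = 0) : ⟪Ψ y w, u⟫_ℂ = 0 := by
  set M : Matrix (Fin 2) (Fin 2) (BH E) := !![(‖y‖ : ℂ) • P, y; star y, (‖y‖ : ℂ) • Q]
  have hMA : entriesIn M A := by
    intro i j
    fin_cases i <;> fin_cases j
    exacts [A.smul_mem _ hPA, hyA, hyA', A.smul_mem _ hQA]
  have hpos := hΨcp 2 M hMA (isPositive_matOp_corner hP hQ hy)
  have h00 : M.map Ψ 0 0 = (‖y‖ : ℂ) • P := by
    change Ψ ((‖y‖ : ℂ) • P) = _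
    rw [hΨlin.2 _ _ hPA, hΨP]
  have h11 : M.map Ψ 1 1 = (‖y‖ : ℂ) • Q := by
    change Ψ ((‖y‖ : ℂ) • Q) = _
    rw [hΨlin.2 _ _ hQA, hΨQ]
  refine inner_matOp_two_apply_eq_zero_of_isPositive hpos ?_
  rw [h00, h11]
  rcases h with h | h
  · left; simp [h]
  · right; simp [h]

end OperatorMatrices

lemma _root_.IsIdempotentElem.mul_mul_mul_self {R : Type*} [Semigroup R] {p q : R}
    (hp : IsIdempotentElem p) (hq : IsIdempotentElem q) (z : R) :
    p * (p * z * q) * q = p * z * q := by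
  rw [← mul_assoc, ← mul_assoc, hp.eq, mul_assoc _ q, hq.eq]

section FubiniProduct

variable {KK HK : Type*} [NormedAddCommGroup KK] [InnerProductSpace ℂ KK] [CompleteSpace KK]
  [NormedAddCommGroup HK] [InnerProductSpace ℂ HK] [CompleteSpace HK] {ι : Type*}

def fubiniSubmodule (J : ι → (KK →L[ℂ] HK)) (S : Submodule ℂ (BH KK)) : Submodule ℂ (BH HK) where
  carrier := fubini J S
  add_mem' {x y} hx hy i j := by
    rw [add_comp, comp_add]
    exact S.add_mem (hx i j) (hy i j)
  zero_mem' i j := by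
    rw [zero_comp, comp_zero]
    exact S.zero_mem
  smul_mem' c x hx i j := by
    rw [smul_comp, comp_smul]
    exact S.smul_mem c (hx i j)

variable {J : ι → (KK →L[ℂ] HK)} {S : Submodule ℂ (BH KK)}

lemma star_mem_fubiniSubmodule (hS : ∀ s ∈ S, star s ∈ S) {x : BH HK}
    (hx : x ∈ fubiniSubmodule J S) : star x ∈ fubiniSubmodule J S := by
  intro i j
  have h := hS _ (hx j i)
  rwa [star_eq_adjoint, adjoint_comp, adjoint_comp, adjoint_adjoint, ← star_eq_adjoint,
    comp_assoc] at h

lemma adjoint_comp_comp_eq_zero {A B : KK →L[ℂ] HK} {T : BH HK}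
    (h : ∀ u w, ⟪T (B w), A u⟫_ℂ = 0) : A† ∘L (T ∘L B) = 0 := by
  ext w
  refine ext_inner_left ℂ fun u => ?_
  rw [comp_apply, comp_apply, adjoint_inner_right, zero_apply, inner_zero_right, ← inner_conj_symm,
    h, map_zero]

lemma eq_of_forall_adjoint_comp_comp_eq (htot : ∀ η : HK, (∀ i, adjoint (J i) η = 0) → η = 0)
    {T T' : BH HK} (h : ∀ i j, (J i)† ∘L (T ∘L J j) = (J i)† ∘L (T' ∘L J j)) : T = T' := by
  rw [← sub_eq_zero]
  set D := T - T'
  have hDJ : ∀ j κ, D (J j κ) = 0 := fun j κ => htot _ fun i => by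
    simpa [D, sub_eq_zero] using congr($(h i j) κ)
  have hDadjJ : ∀ j κ, adjoint D (J j κ) = 0 := fun j κ => htot _ fun i =>
    ext_inner_left ℂ fun v => by
      rw [adjoint_inner_right, adjoint_inner_right, hDJ, inner_zero_left, inner_zero_right]
  ext ζ
  refine htot _ fun i => ext_inner_left ℂ fun v => ?_
  rw [adjoint_inner_right, ← adjoint_inner_left, hDadjJ, inner_zero_left,
    inner_zero_right]

variable [DecidableEq ι] (hJ : ∀ a b, (J a)† ∘L J b = if a = b then 1 else 0)
include hJ

lemma one_mem_fubiniSubmodule (hS : 1 ∈ S) : 1 ∈ fubiniSubmodule J S := by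
  intro a b
  rw [one_def, id_comp, hJ]
  split_ifs
  exacts [hS, S.zero_mem]

lemma comp_comp_adjoint_mem_fubiniSubmodule {s : BH KK} (hs : s ∈ S) (i j : ι) :
    J i ∘L s ∘L (J j)† ∈ fubiniSubmodule J S := by
  intro a b
  have : (J a)† ∘L ((J i ∘L s ∘L (J j)†) ∘L J b) = ((J a)† ∘L J i) ∘L s ∘L ((J j)† ∘L J b) := rfl
  rw [this, hJ, hJ]
  split_ifs <;> simp [one_def, hs]

lemma comp_adjoint_mem_fubiniSubmodule (hS : 1 ∈ S) (k : ι) :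
    J k ∘L (J k)† ∈ fubiniSubmodule J S := by
  simpa [one_def] using comp_comp_adjoint_mem_fubiniSubmodule hJ hS k k

lemma mul_comp_adjoint_mem_fubiniSubmodule {x : BH HK} (hx : x ∈ fubiniSubmodule J S) (k : ι) :
    x * (J k ∘L (J k)†) ∈ fubiniSubmodule J S := by
  intro a b
  have : (J a)† ∘L ((x * (J k ∘L (J k)†)) ∘L J b) = ((J a)† ∘L x ∘L J k) ∘L ((J k)† ∘L J b) := rfl
  rw [this, hJ]
  split_ifs <;> simp [one_def, hx a k]

lemma isStarProjection_comp_adjoint (k : ι) : IsStarProjection (J k ∘L (J k)†) := by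
  refine ⟨?_, ?_⟩
  · change J k ∘L ((J k)† ∘L J k) ∘L (J k)† = J k ∘L (J k)†
    rw [hJ, if_pos rfl, one_def, id_comp]
  · rw [IsSelfAdjoint, star_eq_adjoint, adjoint_comp, adjoint_adjoint]

lemma comp_adjoint_mul_mem_fubiniSubmodule (hS : ∀ s ∈ S, star s ∈ S) {x : BH HK}
    (hx : x ∈ fubiniSubmodule J S) (k : ι) : (J k ∘L (J k)†) * x ∈ fubiniSubmodule J S := by
  have : (J k ∘L (J k)†) * x = star (star x * (J k ∘L (J k)†)) := by
    rw [star_mul, star_star, (isStarProjection_comp_adjoint hJ k).isSelfAdjoint.star_eq]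
  rw [this]
  exact star_mem_fubiniSubmodule hS
    (mul_comp_adjoint_mem_fubiniSubmodule hJ (star_mem_fubiniSubmodule hS hx) k)

lemma one_sub_comp_adjoint_apply (k : ι) (κ : KK) : (1 - J k ∘L (J k)†) (J k κ) = 0 := by
  have : adjoint (J k) (J k κ) = κ := by simpa using congr($(hJ k k) κ)
  simp [this]

theorem adjoint_comp_comp_eq_of_isCompletelyPositiveOn (hS1 : 1 ∈ S) (hSstar : ∀ s ∈ S, star s ∈ S)
    {Ψ : BH HK → BH HK} (hΨlin : IsLinearOn Ψ (fubiniSubmodule J S))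
    (hΨcp : IsCompletelyPositiveOn Ψ (fubiniSubmodule J S)) (hΨ1 : Ψ 1 = 1)
    (hΨfix : ∀ i j, ∀ s ∈ S, Ψ (J i ∘L s ∘L (J j)†) = J i ∘L s ∘L (J j)†)
    {x : BH HK} (hx : x ∈ fubiniSubmodule J S) (i j : ι) :
    (J i)† ∘L (Ψ x ∘L J j) = (J i)† ∘L (x ∘L J j) := by
  set A := fubiniSubmodule J S
  set P : ι → BH HK := fun k => J k ∘L (J k)†
  have hP : ∀ k, IsStarProjection (P k) := isStarProjection_comp_adjoint hJ
  have hPA : ∀ k, P k ∈ A := comp_adjoint_mem_fubiniSubmodule hJ hS1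
  have hA1 : (1 : BH HK) ∈ A := one_mem_fubiniSubmodule hJ hS1
  have hΨP : ∀ k, Ψ (P k) = P k := fun k => by simpa [one_def] using hΨfix k k 1 hS1
  have hΨQ : ∀ k, Ψ (1 - P k) = 1 - P k := fun k => by rw [hΨlin.map_sub hA1 (hPA k), hΨ1, hΨP]
  have hxP : x * P j ∈ A := mul_comp_adjoint_mem_fubiniSubmodule hJ hx j
  have hcorner : P i * x * P j = J i ∘L ((J i)† ∘L (x ∘L J j)) ∘L (J j)† := rfl
  have hcornerA : P i * x * P j ∈ A := by
    rw [mul_assoc]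
    exact comp_adjoint_mul_mem_fubiniSubmodule hJ hSstar hxP i
  set y₁ := (1 - P i) * x * P j
  set y₂ := x * (1 - P j)
  have hy₁ : y₁ ∈ A := by
    have : y₁ = x * P j - P i * (x * P j) := by simp only [y₁]; noncomm_ring
    rw [this]
    exact A.sub_mem hxP (comp_adjoint_mul_mem_fubiniSubmodule hJ hSstar hxP i)
  have hy₂ : y₂ ∈ A := by
    have : y₂ = x - x * P j := by simp only [y₂]; noncomm_ring
    rw [this]
    exact A.sub_mem hx hxP
  -- Both off-corner pieces are killed by the `(i, j)` slice, since `(1 - P k) J k = 0`.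
  have h₁ : (J i)† ∘L (Ψ y₁ ∘L J j) = 0 := adjoint_comp_comp_eq_zero fun u _ =>
    hΨcp.inner_apply_eq_zero_of_corner hΨlin (hP i).one_sub (hP j) (A.sub_mem hA1 (hPA i))
      (hPA j) (hΨQ i) (hΨP j)
      ((hP i).one_sub.isIdempotentElem.mul_mul_mul_self (hP j).isIdempotentElem x) hy₁
      (star_mem_fubiniSubmodule hSstar hy₁) (Or.inr (one_sub_comp_adjoint_apply hJ i u))
  have h₂ : (J i)† ∘L (Ψ y₂ ∘L J j) = 0 := adjoint_comp_comp_eq_zero fun _ w =>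
    hΨcp.inner_apply_eq_zero_of_corner hΨlin (IsStarProjection.one _) (hP j).one_sub hA1
      (A.sub_mem hA1 (hPA j)) hΨ1 (hΨQ j)
      (by simpa using IsIdempotentElem.one.mul_mul_mul_self (hP j).one_sub.isIdempotentElem x) hy₂
      (star_mem_fubiniSubmodule hSstar hy₂) (Or.inl (one_sub_comp_adjoint_apply hJ j w))
  have hΨx : Ψ x = P i * x * P j + Ψ y₁ + Ψ y₂ := by
    have hdecomp : x = P i * x * P j + y₁ + y₂ := by simp only [y₁, y₂]; noncomm_ring
    conv_lhs => rw [hdecomp]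
    rw [hΨlin.1 _ (A.add_mem hcornerA hy₁) _ hy₂, hΨlin.1 _ hcornerA _ hy₁, hcorner,
      hΨfix i j _ (hx i j)]
  rw [hΨx, add_comp, add_comp, comp_add, comp_add, h₁, h₂, add_zero, add_zero, hcorner]
  change ((J i)† ∘L J i) ∘L ((J i)† ∘L (x ∘L J j)) ∘L ((J j)† ∘L J j) = _
  rw [hJ, hJ, if_pos rfl, if_pos rfl, one_def, id_comp, comp_id]

theorem eq_of_isCompletelyPositiveOn_fubiniSubmodule
    (htot : ∀ η : HK, (∀ i, adjoint (J i) η = 0) → η = 0) (hS1 : 1 ∈ S)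
    (hSstar : ∀ s ∈ S, star s ∈ S) {Ψ : BH HK → BH HK} (hΨlin : IsLinearOn Ψ (fubiniSubmodule J S))
    (hΨcp : IsCompletelyPositiveOn Ψ (fubiniSubmodule J S)) (hΨ1 : Ψ 1 = 1)
    (hΨfix : ∀ i j, ∀ s ∈ S, Ψ (J i ∘L s ∘L (J j)†) = J i ∘L s ∘L (J j)†)
    {x : BH HK} (hx : x ∈ fubiniSubmodule J S) : Ψ x = x :=
  eq_of_forall_adjoint_comp_comp_eq htot
    (adjoint_comp_comp_eq_of_isCompletelyPositiveOn hJ hS1 hSstar hΨlin hΨcp hΨ1 hΨfix hx)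

end FubiniProduct

lemma _root_.Orthonormal.eq_zero_of_forall_inner_eq_zero {H ι : Type*} [NormedAddCommGroup H]
    [InnerProductSpace ℂ H] [CompleteSpace H] {e : ι → H}
    (he : Orthonormal ℂ e) (hsp : (Submodule.span ℂ (Set.range e)).topologicalClosure = ⊤) {v : H}
    (hv : ∀ i, ⟪e i, v⟫_ℂ = 0) : v = 0 := by
  set b := HilbertBasis.mk he hsp.ge
  have : b.repr v = 0 := by
    ext i
    simp [b.repr_apply_apply, b, HilbertBasis.coe_mk, hv]
  simpa using congr(b.repr.symm $this)

lemma _root_.Orthonormal.countable_setOf_exists_inner_ne_zero {H ι : Type*} [NormedAddCommGroup H]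
    [InnerProductSpace ℂ H] {e : ι → H}
    (he : Orthonormal ℂ e) {s : Set H} (hs : TopologicalSpace.IsSeparable s) :
    {i | ∃ z ∈ s, ⟪e i, z⟫_ℂ ≠ 0}.Countable := by
  obtain ⟨c, hc, hsc⟩ := hs
  refine (hc.biUnion fun z _ => (he.inner_products_summable z).countable_support).mono ?_
  rintro i ⟨z, hz, hiz⟩
  by_contra hi
  simp only [Set.mem_iUnion, Function.mem_support, not_exists, not_not] at hi
  have hclosed : IsClosed {z : H | ⟪e i, z⟫_ℂ = 0} :=
    isClosed_eq (continuous_const.inner continuous_id) continuous_const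
  exact hiz (closure_minimal (fun z hz => by simpa using hi z hz) hclosed (hsc hz))

section MInfty

variable {X : Type*} [MeasurableSpace X]

lemma const_mem_mInfty (c : ℂ) : (fun _ : X => c) ∈ MInfty X :=
  ⟨measurable_const, ‖c‖, fun _ => le_rfl⟩

lemma add_mem_mInfty {f g : X → ℂ} (hf : f ∈ MInfty X) (hg : g ∈ MInfty X) :
    f + g ∈ MInfty X := by
  obtain ⟨hfm, C, hC⟩ := hf
  obtain ⟨hgm, D, hD⟩ := hg
  exact ⟨hfm.add hgm, C + D, fun x => (norm_add_le _ _).trans (add_le_add (hC x) (hD x))⟩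

lemma smul_mem_mInfty (c : ℂ) {f : X → ℂ} (hf : f ∈ MInfty X) : c • f ∈ MInfty X := by
  obtain ⟨hfm, C, hC⟩ := hf
  refine ⟨hfm.const_smul c, ‖c‖ * C, fun x => ?_⟩
  rw [Pi.smul_apply, norm_smul]
  exact mul_le_mul_of_nonneg_left (hC x) (norm_nonneg c)

lemma star_mem_mInfty {f : X → ℂ} (hf : f ∈ MInfty X) : star f ∈ MInfty X := by
  obtain ⟨hfm, C, hC⟩ := hf
  exact ⟨continuous_star.measurable.comp hfm, C, fun x => (norm_star (f x)).trans_le (hC x)⟩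

end MInfty

section LTwo

variable {X : Type*} [MeasurableSpace X] {μ : Measure X}
  {H : Type*} [NormedAddCommGroup H] [InnerProductSpace ℂ H] [CompleteSpace H]

namespace IsMulRepL

variable {mulC : (X → ℂ) → BH (Lp ℂ 2 μ)} (hmulC : IsMulRepL μ mulC)
include hmulC

lemma eq_apply {f : X → ℂ} (hf : f ∈ MInfty X) {T : BH (Lp ℂ 2 μ)}
    (hT : ∀ ξ : Lp ℂ 2 μ, ⇑(T ξ) =ᵐ[μ] fun x => f x • ξ x) : mulC f = T :=
  ext fun ξ => Lp.ext ((hmulC f hf ξ).trans (hT ξ).symm)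

lemma map_one : mulC (fun _ => 1) = 1 :=
  hmulC.eq_apply (const_mem_mInfty 1) fun ξ => by simp

lemma map_add {f g : X → ℂ} (hf : f ∈ MInfty X) (hg : g ∈ MInfty X) :
    mulC (f + g) = mulC f + mulC g :=
  hmulC.eq_apply (add_mem_mInfty hf hg) fun ξ => by
    filter_upwards [Lp.coeFn_add (mulC f ξ) (mulC g ξ), hmulC f hf ξ, hmulC g hg ξ]
      with x h₁ h₂ h₃
    rw [add_apply, h₁, Pi.add_apply, h₂, h₃, Pi.add_apply, add_smul]

lemma map_smul (c : ℂ) {f : X → ℂ} (hf : f ∈ MInfty X) : mulC (c • f) = c • mulC f :=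
  hmulC.eq_apply (smul_mem_mInfty c hf) fun ξ => by
    filter_upwards [Lp.coeFn_smul c (mulC f ξ), hmulC f hf ξ] with x h₁ h₂
    rw [smul_apply, h₁, Pi.smul_apply, h₂, Pi.smul_apply, smul_smul]
    rfl

lemma adjoint_eq {f : X → ℂ} (hf : f ∈ MInfty X) : (mulC f)† = mulC (star f) := by
  symm
  rw [eq_adjoint_iff]
  intro ξ η
  rw [L2.inner_def, L2.inner_def]
  refine integral_congr_ae ?_
  filter_upwards [hmulC _ (star_mem_mInfty hf) ξ, hmulC f hf η] with x h₁ h₂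
  rw [h₁, h₂, inner_smul_left, inner_smul_right, Pi.star_apply, RCLike.star_def,
    Complex.conj_conj]

def submodule : Submodule ℂ (BH (Lp ℂ 2 μ)) where
  carrier := mulC '' MInfty X
  add_mem' := by
    rintro _ _ ⟨f, hf, rfl⟩ ⟨g, hg, rfl⟩
    exact ⟨f + g, add_mem_mInfty hf hg, hmulC.map_add hf hg⟩
  zero_mem' := ⟨0, const_mem_mInfty 0, by
    simpa using hmulC.map_smul 0 (const_mem_mInfty 1)⟩
  smul_mem' := by
    rintro c _ ⟨f, hf, rfl⟩
    exact ⟨c • f, smul_mem_mInfty c hf, hmulC.map_smul c hf⟩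

lemma one_mem_submodule : 1 ∈ hmulC.submodule :=
  ⟨fun _ => 1, const_mem_mInfty 1, hmulC.map_one⟩

lemma star_mem_submodule {s : BH (Lp ℂ 2 μ)} (hs : s ∈ hmulC.submodule) :
    star s ∈ hmulC.submodule := by
  obtain ⟨f, hf, rfl⟩ := hs
  exact ⟨star f, star_mem_mInfty hf, by rw [star_eq_adjoint, hmulC.adjoint_eq hf]⟩

end IsMulRepL

namespace IsTensorIsometriesL

variable {ι : Type*} {e : ι → H} {JC : ι → (Lp ℂ 2 μ →L[ℂ] Lp H 2 μ)}
  (hJC : IsTensorIsometriesL μ e JC)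
include hJC

lemma adjoint_apply (i : ι) (ξ : Lp H 2 μ) :
    ⇑(adjoint (JC i) ξ) =ᵐ[μ] fun x => ⟪e i, ξ x⟫_ℂ := by
  have hg : MemLp (fun x => ⟪e i, ξ x⟫_ℂ) 2 μ := (Lp.memLp ξ).const_inner (e i)
  have key : adjoint (JC i) ξ = hg.toLp _ := by
    refine ext_inner_left ℂ fun k => ?_
    rw [adjoint_inner_right, L2.inner_def, L2.inner_def]
    refine integral_congr_ae ?_
    filter_upwards [hJC.2.2 i k, hg.coeFn_toLp] with x h₁ h₂
    rw [h₁, h₂, inner_smul_left, RCLike.inner_apply, mul_comm]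
  rw [key]
  exact hg.coeFn_toLp

lemma adjoint_comp [DecidableEq ι] (a b : ι) : (JC a)† ∘L JC b = if a = b then 1 else 0 := by
  have : (JC a)† ∘L JC b = ⟪e a, e b⟫_ℂ • (1 : BH (Lp ℂ 2 μ)) := by
    refine ext fun κ => Lp.ext ?_
    filter_upwards [hJC.adjoint_apply a (JC b κ), hJC.2.2 b κ, Lp.coeFn_smul ⟪e a, e b⟫_ℂ κ]
      with x h₁ h₂ h₃
    rw [comp_apply, h₁, h₂, smul_apply, one_apply_eq_self, h₃, inner_smul_right, Pi.smul_apply,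
      smul_eq_mul, mul_comm]
  rw [this, orthonormal_iff_ite.mp hJC.1, ite_smul, one_smul, zero_smul]

lemma eq_zero_of_forall_adjoint_apply_eq_zero {η : Lp H 2 μ} (h : ∀ i, adjoint (JC i) η = 0) :
    η = 0 := by
  obtain ⟨G, hGm, hηG⟩ := Lp.aestronglyMeasurable η
  have hC := hJC.1.countable_setOf_exists_inner_ne_zero hGm.isSeparable_range
  have hzero : ∀ i, ∀ᵐ x ∂μ, ⟪e i, G x⟫_ℂ = 0 := fun i => by
    filter_upwards [hJC.adjoint_apply i η, Lp.coeFn_zero ℂ 2 μ, hηG] with x h₁ h₂ h₃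
    rw [← h₃, ← h₁, h i, h₂, Pi.zero_apply]
  have hG0 : ∀ᵐ x ∂μ, G x = 0 := by
    filter_upwards [(ae_ball_iff hC).mpr fun i _ => hzero i] with x hx
    refine hJC.1.eq_zero_of_forall_inner_eq_zero hJC.2.1 fun i => ?_
    by_contra hi
    exact hi (hx i ⟨G x, Set.mem_range_self x, hi⟩)
  refine Lp.ext ?_
  filter_upwards [hηG, hG0, Lp.coeFn_zero H 2 μ] with x h₁ h₂ h₃
  rw [h₁, h₂, h₃, Pi.zero_apply]

lemma comp_mulRep_comp_adjoint {mulC : (X → ℂ) → BH (Lp ℂ 2 μ)} (hmulC : IsMulRepL μ mulC)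
    {oTC : BH H → (X → ℂ) → BH (Lp H 2 μ)} (hoTC : IsElemTensorRepL μ oTC)
    {f : X → ℂ} (hf : f ∈ MInfty X) (i j : ι) :
    JC i ∘L mulC f ∘L (JC j)† = oTC (InnerProductSpace.rankOne ℂ (e i) (e j)) f := by
  refine ext fun ξ => Lp.ext ?_
  filter_upwards [hJC.2.2 i (mulC f (adjoint (JC j) ξ)), hmulC f hf (adjoint (JC j) ξ),
    hJC.adjoint_apply j ξ, hoTC _ f hf ξ] with x h₁ h₂ h₃ h₄
  rw [comp_apply, comp_apply, h₁, h₂, h₃, h₄, InnerProductSpace.rankOne_apply, smul_smul]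
  rfl

end IsTensorIsometriesL

lemma IsElemTensorRepL.congr {oTC : BH H → (X → ℂ) → BH (Lp H 2 μ)} (hoTC : IsElemTensorRepL μ oTC)
    (T : BH H) {f g : X → ℂ} (hf : f ∈ MInfty X) (hg : g ∈ MInfty X) (hfg : f =ᵐ[μ] g) :
    oTC T f = oTC T g :=
  ext fun ξ => Lp.ext <| by
    filter_upwards [hoTC T f hf ξ, hoTC T g hg ξ, hfg] with x h₁ h₂ h₃
    rw [h₁, h₂, h₃]

end LTwo

theorem statement2_general
    {X : Type u} [MeasurableSpace X] (μ : MeasureTheory.Measure X)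
    {H : Type u} [NormedAddCommGroup H] [InnerProductSpace ℂ H] [CompleteSpace H]
    {ι : Type u} (e : ι → H)
    -- `M^∞(F)` represented by multiplication operators on `ℓ²(X)`, and the isometries
    -- realizing `B(H) ⊗̄ M^∞(F)` inside `B(ℓ²(X; H)) = B(H ⊗ ℓ²(X))`
    (JD : ι → (ld2 X ℂ →L[ℂ] ld2 X H))
    (mulD : (X → ℂ) → BH (ld2 X ℂ))
    (oTD : BH H → (X → ℂ) → BH (ld2 X H))
    -- `L^∞(X, μ)` represented by multiplication operators on `L²(X, μ)`, and the isometries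
    -- realizing `B(H) ⊗̄ L^∞(X, μ)` inside `B(L²(X, μ; H)) = B(H ⊗ L²(X, μ))`
    (JC : ι → (MeasureTheory.Lp ℂ 2 μ →L[ℂ] MeasureTheory.Lp H 2 μ))
    (hJC : IsTensorIsometriesL μ e JC)
    (mulC : (X → ℂ) → BH (MeasureTheory.Lp ℂ 2 μ)) (hmulC : IsMulRepL μ mulC)
    (oTC : BH H → (X → ℂ) → BH (MeasureTheory.Lp H 2 μ)) (hoTC : IsElemTensorRepL μ oTC)
    -- `Φq = id ⊗̄ q`: the unique UCP extension of `id ⊙ q`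
    (Φq : BH (ld2 X H) → BH (MeasureTheory.Lp H 2 μ))
    (hΦqucp : IsUCPOn Φq (fubini JD (mulD '' MInfty X)))
    (hΦqext : ∀ (T : BH H), ∀ f ∈ MInfty X, Φq (oTD T f) = oTC T f)
    -- `ρ`: a lifting for `(X, F, μ)`
    (ρL : (X → ℂ) → (X → ℂ)) (hρ : IsLifting μ ρL) :
    -- every unital completely positive map `Φρ` extending `id ⊙ ρ` (with range in
    -- `B(H) ⊗̄ M^∞(F)`) is a unital complete order embedding and is a right inverse of `Φq`
    ∀ Φρ : BH (MeasureTheory.Lp H 2 μ) → BH (ld2 X H),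
      IsUCPOn Φρ (fubini JC (mulC '' MInfty X)) →
      (∀ (T : BH H), ∀ f ∈ MInfty X, Φρ (oTC T f) = oTD T (ρL f)) →
      (∀ x ∈ fubini JC (mulC '' MInfty X), Φρ x ∈ fubini JD (mulD '' MInfty X)) →
      (Φρ 1 = 1 ∧ IsCompleteOrderEmbeddingOn Φρ (fubini JC (mulC '' MInfty X)) ∧
        ∀ x ∈ fubini JC (mulC '' MInfty X), Φq (Φρ x) = x) := by
  intro Φρ ⟨hρlin, hρcp, hρone⟩ hρext hρran
  obtain ⟨hqlin, hqcp, hqone⟩ := hΦqucp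
  classical
  have hfix : ∀ i j, ∀ s ∈ hmulC.submodule,
      Φq (Φρ (JC i ∘L s ∘L (JC j)†)) = JC i ∘L s ∘L (JC j)† := by
    rintro i j _ ⟨f, hf, rfl⟩
    obtain ⟨hρf, hρf_ae⟩ := hρ.1 f hf
    rw [hJC.comp_mulRep_comp_adjoint hmulC hoTC hf, hρext _ f hf, hΦqext _ _ hρf,
      hoTC.congr _ hρf hf hρf_ae]
  have hleft : Set.LeftInvOn Φq Φρ (fubini JC (mulC '' MInfty X)) := fun x hx =>
    eq_of_isCompletelyPositiveOn_fubiniSubmodule hJC.adjoint_comp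
      (fun _ => hJC.eq_zero_of_forall_adjoint_apply_eq_zero) hmulC.one_mem_submodule
      (fun _ => hmulC.star_mem_submodule) (hqlin.comp hρlin hρran) (hqcp.comp hρcp hρran)
      (by rw [Function.comp_apply, hρone, hqone]) hfix hx
  exact ⟨hρone, hρcp.isCompleteOrderEmbeddingOn_of_leftInvOn hqcp hρran hleft, hleft⟩

/-- Proposition 3.1.  Let `(X, F, μ)` be a complete measure space, `H` a
Hilbert space, and let `id ⊗̄ q : B(H) ⊗̄ M^∞(F) → B(H) ⊗̄ L^∞(X, μ)` be the unique unital
completely positive map extending `id ⊙ q`.  If `ρ` is a lifting for `(X, F, μ)`, then the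
unique unital completely positive map `id ⊗̄ ρ : B(H) ⊗̄ L^∞(X, μ) → B(H) ⊗̄ M^∞(F)` extending
`id ⊙ ρ` is a unital complete order embedding and satisfies `(id ⊗̄ q) ∘ (id ⊗̄ ρ) = id`. -/
theorem statement2
    {X : Type u} [MeasurableSpace X] (μ : MeasureTheory.Measure X) (hμ : μ.IsComplete)
    {H : Type u} [NormedAddCommGroup H] [InnerProductSpace ℂ H] [CompleteSpace H]
    {ι : Type u} (e : ι → H)
    -- `M^∞(F)` represented by multiplication operators on `ℓ²(X)`, and the isometries
    -- realizing `B(H) ⊗̄ M^∞(F)` inside `B(ℓ²(X; H)) = B(H ⊗ ℓ²(X))`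
    (JD : ι → (ld2 X ℂ →L[ℂ] ld2 X H)) (hJD : IsTensorIsometriesD e JD)
    (mulD : (X → ℂ) → BH (ld2 X ℂ)) (hmulD : IsMulRepD mulD)
    (oTD : BH H → (X → ℂ) → BH (ld2 X H)) (hoTD : IsElemTensorRepD oTD)
    -- `L^∞(X, μ)` represented by multiplication operators on `L²(X, μ)`, and the isometries
    -- realizing `B(H) ⊗̄ L^∞(X, μ)` inside `B(L²(X, μ; H)) = B(H ⊗ L²(X, μ))`
    (JC : ι → (MeasureTheory.Lp ℂ 2 μ →L[ℂ] MeasureTheory.Lp H 2 μ))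
    (hJC : IsTensorIsometriesL μ e JC)
    (mulC : (X → ℂ) → BH (MeasureTheory.Lp ℂ 2 μ)) (hmulC : IsMulRepL μ mulC)
    (oTC : BH H → (X → ℂ) → BH (MeasureTheory.Lp H 2 μ)) (hoTC : IsElemTensorRepL μ oTC)
    -- `Φq = id ⊗̄ q`: the unique UCP extension of `id ⊙ q`
    (Φq : BH (ld2 X H) → BH (MeasureTheory.Lp H 2 μ))
    (hΦqucp : IsUCPOn Φq (fubini JD (mulD '' MInfty X)))
    (hΦqext : ∀ (T : BH H), ∀ f ∈ MInfty X, Φq (oTD T f) = oTC T f)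
    (hΦqran : ∀ x ∈ fubini JD (mulD '' MInfty X), Φq x ∈ fubini JC (mulC '' MInfty X))
    -- `ρ`: a lifting for `(X, F, μ)`
    (ρL : (X → ℂ) → (X → ℂ)) (hρ : IsLifting μ ρL) :
    -- every unital completely positive map `Φρ` extending `id ⊙ ρ` (with range in
    -- `B(H) ⊗̄ M^∞(F)`) is a unital complete order embedding and is a right inverse of `Φq`
    ∀ Φρ : BH (MeasureTheory.Lp H 2 μ) → BH (ld2 X H),
      IsUCPOn Φρ (fubini JC (mulC '' MInfty X)) →
      (∀ (T : BH H), ∀ f ∈ MInfty X, Φρ (oTC T f) = oTD T (ρL f)) →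
      (∀ x ∈ fubini JC (mulC '' MInfty X), Φρ x ∈ fubini JD (mulD '' MInfty X)) →
      (Φρ 1 = 1 ∧ IsCompleteOrderEmbeddingOn Φρ (fubini JC (mulC '' MInfty X)) ∧
        ∀ x ∈ fubini JC (mulC '' MInfty X), Φq (Φρ x) = x) :=
  statement2_general μ e JD mulD oTD JC hJC mulC hmulC oTC hoTC Φq hΦqucp hΦqext ρL hρ

end Paper
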